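/- arXiv:2401.15629 — 2 statements merged into one kernel-verified Lean document; each statement's English description precedes it below -/
import Mathlib

section
/- Let A be a nonempty set, 1 ≤ p < ∞, and let f : ℓ∞(A) → ℝ be nonnegative, positively homogeneous, with ‖f‖_{FBL^p} < ∞, and maximal (every nonnegative positively homogeneous g : ℓ∞(A) → ℝ with f ≤ g pointwise and ‖g‖_{FBL^p} = ‖f‖_{FBL^p} equals f). Then there exists a bounded linear functional φ : ℓ∞(A) → ℝ such that f(x) = |φ(|x|^p)|^{1/p} for every x ∈ ℓ∞(A), where |x|^p ∈ ℓ∞(A) is the function a ↦ |x(a)|^p. -/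
open scoped ENNReal

/-- `‖f‖_{FBL^p}` for a function `f : ℓ∞(A) → ℝ` (with `ℓ∞(A)` realized as the dual of
`ℓ₁(A)`), with values in `[0,∞]`. -/
noncomputable def fblNormP (A : Type*) (p : ℝ) (f : lp (fun _ : A => ℝ) ∞ → ℝ) : ℝ≥0∞ :=
  ⨆ (m : ℕ) (x : Fin m → lp (fun _ : A => ℝ) ∞) (_ : ∀ a : A, ∑ i, |x i a| ^ p ≤ 1),
    ENNReal.ofReal ((∑ i, |f (x i)| ^ p) ^ (1 / p))

/-- The pointwise `p`-th power of the absolute value, `|x|^p`, as an element of `ℓ∞(A)`. -/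
noncomputable def absRpow {A : Type*} (p : ℝ) (hp : 0 ≤ p)
    (x : lp (fun _ : A => ℝ) ∞) : lp (fun _ : A => ℝ) ∞ :=
  ⟨fun a => |x a| ^ p, by
    apply memℓp_infty
    refine ⟨‖x‖ ^ p, ?_⟩
    rintro r ⟨a, rfl⟩
    have h1 : |x a| ≤ ‖x‖ := by
      have := lp.norm_apply_le_norm (p := ∞) (by norm_num) x a
      rwa [Real.norm_eq_abs] at this
    have h2 := Real.rpow_le_rpow (abs_nonneg (x a)) h1 hp
    calc ‖|x a| ^ p‖ = |x a| ^ p := by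
            rw [Real.norm_eq_abs, abs_of_nonneg (Real.rpow_nonneg (abs_nonneg (x a)) p)]
      _ ≤ ‖x‖ ^ p := h2⟩

lemma sum_csSup_le {m : ℕ} (S : Fin m → Set ℝ) (hne : ∀ i, (S i).Nonempty)
    {c : ℝ} (h : ∀ r : Fin m → ℝ, (∀ i, r i ∈ S i) → ∑ i, r i ≤ c) :
    ∑ i, sSup (S i) ≤ c := by
  rcases Nat.eq_zero_or_pos m with hm | hm
  · subst hm
    simpa using h (fun i => (hne i).choose) (fun i => (hne i).choose_spec)
  · apply le_of_forall_sub_le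
    intro ε hε
    have hδ : 0 < ε / m := div_pos hε (by exact_mod_cast hm)
    choose r hr hlt using fun i =>
      exists_lt_of_lt_csSup (hne i) (show sSup (S i) - ε / m < sSup (S i) by linarith)
    have h1 : ∑ i, sSup (S i) ≤ ∑ i, (r i + ε / m) :=
      Finset.sum_le_sum fun i _ => by linarith [hlt i]
    have h2 : ∑ i : Fin m, (r i + ε / m) = (∑ i, r i) + ε := by
      rw [Finset.sum_add_distrib, Finset.sum_const, Finset.card_univ, Fintype.card_fin,
        nsmul_eq_mul, mul_div_cancel₀]
      positivity
    have := h r hr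
    linarith

section Basic
variable {A : Type*} {p : ℝ}

lemma fblNormP_mono (hp0 : 0 ≤ p) (g h : lp (fun _ : A => ℝ) ∞ → ℝ) (hg : ∀ x, 0 ≤ g x)
    (hgh : ∀ x, g x ≤ h x) : fblNormP A p g ≤ fblNormP A p h := by
  refine iSup_le fun m => iSup_le fun x => iSup_le fun hx => ?_
  refine le_iSup_of_le m (le_iSup_of_le x (le_iSup_of_le hx ?_))
  apply ENNReal.ofReal_le_ofReal
  apply Real.rpow_le_rpow (by positivity)
  · refine Finset.sum_le_sum fun i _ => ?_
    apply Real.rpow_le_rpow (abs_nonneg _) _ hp0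
    rw [abs_of_nonneg (hg _)]
    exact (hgh _).trans (le_abs_self _)
  · exact one_div_nonneg.mpr hp0

lemma fblNormP_le_of_forall (g : lp (fun _ : A => ℝ) ∞ → ℝ) {M : ℝ}
    (h : ∀ (m : ℕ) (x : Fin m → lp (fun _ : A => ℝ) ∞),
      (∀ a : A, ∑ i, |x i a| ^ p ≤ 1) → (∑ i, |g (x i)| ^ p) ^ (1 / p) ≤ M) :
    fblNormP A p g ≤ ENNReal.ofReal M :=
  iSup_le fun m => iSup_le fun x => iSup_le fun hx =>
    ENNReal.ofReal_le_ofReal (h m x hx)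

lemma le_fblNormP (g : lp (fun _ : A => ℝ) ∞ → ℝ) (m : ℕ)
    (x : Fin m → lp (fun _ : A => ℝ) ∞) (hx : ∀ a : A, ∑ i, |x i a| ^ p ≤ 1) :
    ENNReal.ofReal ((∑ i, |g (x i)| ^ p) ^ (1 / p)) ≤ fblNormP A p g :=
  le_iSup_of_le m (le_iSup_of_le x (le_iSup_of_le hx le_rfl))

end Basic


set_option maxHeartbeats 2000000 in
/-- **Lemma.** Every maximal nonnegative positively homogeneous `f : ℓ∞(A) → ℝ` of finite
`FBL^p`-norm is of the form `f(x) = |φ(|x|^p)|^{1/p}` for some bounded linear functional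
`φ` on `ℓ∞(A)`. -/
theorem maximal_eq_gPhi
    (A : Type*) [Nonempty A] (p : ℝ) (hp : 1 ≤ p)
    (f : lp (fun _ : A => ℝ) ∞ → ℝ)
    (hnn : ∀ x, 0 ≤ f x)
    (hph : ∀ t : ℝ, 0 ≤ t → ∀ x, f (t • x) = t * f x)
    (hfin : fblNormP A p f ≠ ⊤)
    (hmax : ∀ g : lp (fun _ : A => ℝ) ∞ → ℝ, (∀ x, 0 ≤ g x) →
      (∀ t : ℝ, 0 ≤ t → ∀ x, g (t • x) = t * g x) →
      (∀ x, f x ≤ g x) → fblNormP A p g = fblNormP A p f → g = f) :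
    ∃ φ : lp (fun _ : A => ℝ) ∞ →L[ℝ] ℝ,
      ∀ x, f x = |φ (absRpow p (zero_le_one.trans hp) x)| ^ (1 / p) := by
  classical
  have hp0 : (0:ℝ) < p := lt_of_lt_of_le one_pos hp
  have hpne : p ≠ 0 := ne_of_gt hp0
  have hp0' : (0:ℝ) ≤ p := le_of_lt hp0
  have hip0 : (0:ℝ) ≤ 1 / p := by positivity
  have hipne : 1 / p ≠ 0 := one_div_ne_zero hpne
  have hcanc1 : ∀ s : ℝ, 0 ≤ s → (s ^ (1 / p)) ^ p = s := fun s hs => by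
    rw [one_div]; exact Real.rpow_inv_rpow hs hpne
  have hcanc2 : ∀ s : ℝ, 0 ≤ s → (s ^ p) ^ (1 / p) = s := fun s hs => by
    rw [one_div]; exact Real.rpow_rpow_inv hs hpne
  have hrec : ∀ s t : ℝ, 0 ≤ s → 0 ≤ t → s ^ p ≤ t ^ p → s ≤ t := fun s t hs ht h => by
    have h2 := Real.rpow_le_rpow (Real.rpow_nonneg hs p) h hip0
    rwa [hcanc2 s hs, hcanc2 t ht] at h2
  -- pointwise evaluation lemmas
  have happ_add : ∀ (x y : lp (fun _ : A => ℝ) ∞) (a : A), (x + y) a = x a + y a :=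
    fun x y a => by simp [lp.coeFn_add]
  have happ_smul : ∀ (c : ℝ) (x : lp (fun _ : A => ℝ) ∞) (a : A), (c • x) a = c * x a :=
    fun c x a => by simp [lp.coeFn_smul]
  have happ_neg : ∀ (x : lp (fun _ : A => ℝ) ∞) (a : A), (-x) a = -(x a) :=
    fun x a => by simp [lp.coeFn_neg]
  have happ_zero : ∀ a : A, (0 : lp (fun _ : A => ℝ) ∞) a = 0 := fun a => by
    simp [lp.coeFn_zero]
  have happ_sum : ∀ (m : ℕ) (x : Fin m → lp (fun _ : A => ℝ) ∞) (a : A),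
      (∑ i, x i) a = ∑ i, x i a := fun m x a => by
    rw [lp.coeFn_sum]; simp
  have habs : ∀ (z : lp (fun _ : A => ℝ) ∞) (a : A), |z a| ≤ ‖z‖ := fun z a => by
    have := lp.norm_apply_le_norm (p := ∞) (by norm_num) z a
    rwa [Real.norm_eq_abs] at this
  set M : ℝ := (fblNormP A p f).toReal with hMdef
  have hM0 : 0 ≤ M := ENNReal.toReal_nonneg
  have hNf : fblNormP A p f = ENNReal.ofReal M := (ENNReal.ofReal_toReal hfin).symm
  -- L1 : the fundamental bound
  have L1 : ∀ (m : ℕ) (x : Fin m → lp (fun _ : A => ℝ) ∞),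
      (∀ a : A, ∑ i, |x i a| ^ p ≤ 1) → ∑ i, |f (x i)| ^ p ≤ M ^ p := by
    intro m x hx
    have h1 := le_fblNormP f m x hx
    rw [hNf] at h1
    have h2 : (∑ i, |f (x i)| ^ p) ^ (1 / p) ≤ M := (ENNReal.ofReal_le_ofReal_iff hM0).mp h1
    have hs : 0 ≤ ∑ i, |f (x i)| ^ p :=
      Finset.sum_nonneg fun i _ => Real.rpow_nonneg (abs_nonneg _) _
    calc ∑ i, |f (x i)| ^ p = ((∑ i, |f (x i)| ^ p) ^ (1 / p)) ^ p := (hcanc1 _ hs).symm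
      _ ≤ M ^ p := Real.rpow_le_rpow (Real.rpow_nonneg hs _) h2 hp0'
  have hf0 : f 0 = 0 := by
    have h := hph 0 le_rfl 0
    rw [zero_smul] at h; linarith
  -- growth bound : f x ≤ M * ‖x‖
  have fbound : ∀ x, f x ≤ M * ‖x‖ := by
    intro x
    rcases eq_or_lt_of_le (norm_nonneg x) with hx | hx
    · have hx0 : x = 0 := norm_eq_zero.mp hx.symm
      rw [hx0, hf0]
      positivity
    · have hxne : ‖x‖ ≠ 0 := ne_of_gt hx
      have hc0 : 0 ≤ ‖x‖⁻¹ := inv_nonneg.mpr (norm_nonneg x)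
      have key := L1 1 (fun _ => ‖x‖⁻¹ • x) ?_
      · rw [Fin.sum_univ_one] at key
        have hfx : f (‖x‖⁻¹ • x) = ‖x‖⁻¹ * f x := hph _ hc0 x
        rw [hfx, abs_of_nonneg (mul_nonneg hc0 (hnn x))] at key
        have h3 : ‖x‖⁻¹ * f x ≤ M := hrec _ _ (mul_nonneg hc0 (hnn x)) hM0 key
        calc f x = ‖x‖ * (‖x‖⁻¹ * f x) := by
              rw [← mul_assoc, mul_inv_cancel₀ hxne, one_mul]
          _ ≤ ‖x‖ * M := by
              exact mul_le_mul_of_nonneg_left h3 (norm_nonneg x)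
          _ = M * ‖x‖ := mul_comm _ _
      · intro a
        rw [Fin.sum_univ_one, happ_smul]
        apply Real.rpow_le_one (abs_nonneg _) _ hp0'
        rw [abs_mul, abs_of_nonneg hc0]
        calc ‖x‖⁻¹ * |x a| ≤ ‖x‖⁻¹ * ‖x‖ := mul_le_mul_of_nonneg_left (habs x a) hc0
          _ = 1 := inv_mul_cancel₀ hxne
  -- ============ STEP 1 : superadditivity via maximality ============
  set S1 : lp (fun _ : A => ℝ) ∞ → Set ℝ := fun x =>
    { r | ∃ y z : lp (fun _ : A => ℝ) ∞,
        (∀ a, |y a| ^ p + |z a| ^ p ≤ |x a| ^ p) ∧ r = f y ^ p + f z ^ p } with hS1def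
  have S1mem : ∀ x, f x ^ p ∈ S1 x := by
    intro x
    refine ⟨x, 0, fun a => ?_, by rw [hf0, Real.zero_rpow hpne, add_zero]⟩
    rw [happ_zero, abs_zero, Real.zero_rpow hpne, add_zero]
  have S1bdd : ∀ x, ∀ r ∈ S1 x, r ≤ M ^ p * ‖x‖ ^ p := by
    rintro x r ⟨y, z, hc, rfl⟩
    rcases eq_or_lt_of_le (norm_nonneg x) with hx | hx
    · -- x = 0 : then y = z = 0
      have hx0 : x = 0 := norm_eq_zero.mp hx.symm
      subst hx0
      have hyz : ∀ a, y a = 0 ∧ z a = 0 := by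
        intro a
        have := hc a
        rw [happ_zero, abs_zero, Real.zero_rpow hpne] at this
        have h1 : (0:ℝ) ≤ |y a| ^ p := Real.rpow_nonneg (abs_nonneg _) _
        have h2 : (0:ℝ) ≤ |z a| ^ p := Real.rpow_nonneg (abs_nonneg _) _
        constructor
        · have : |y a| ^ p = 0 := le_antisymm (by linarith) h1
          have := hrec |y a| 0 (abs_nonneg _) le_rfl (by rw [this, Real.zero_rpow hpne])
          exact abs_nonpos_iff.mp this
        · have : |z a| ^ p = 0 := le_antisymm (by linarith) h2
          have := hrec |z a| 0 (abs_nonneg _) le_rfl (by rw [this, Real.zero_rpow hpne])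
          exact abs_nonpos_iff.mp this
      have hy0 : y = 0 := by ext a; rw [(hyz a).1, happ_zero]
      have hz0 : z = 0 := by ext a; rw [(hyz a).2, happ_zero]
      rw [hy0, hz0, hf0, Real.zero_rpow hpne]
      have := mul_nonneg (Real.rpow_nonneg hM0 p)
        (Real.rpow_nonneg (norm_nonneg (0 : lp (fun _ : A => ℝ) ∞)) p)
      linarith
    · have hxne : ‖x‖ ≠ 0 := ne_of_gt hx
      have hc0 : 0 ≤ ‖x‖⁻¹ := inv_nonneg.mpr (norm_nonneg x)
      have key := L1 2 ![‖x‖⁻¹ • y, ‖x‖⁻¹ • z] ?_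
      · rw [Fin.sum_univ_two] at key
        simp only [Matrix.cons_val_zero, Matrix.cons_val_one, Matrix.head_cons] at key
        rw [hph _ hc0 y, hph _ hc0 z, abs_of_nonneg (mul_nonneg hc0 (hnn y)),
          abs_of_nonneg (mul_nonneg hc0 (hnn z)), Real.mul_rpow hc0 (hnn y),
          Real.mul_rpow hc0 (hnn z), ← mul_add] at key
        have hxp : (0:ℝ) < ‖x‖⁻¹ ^ p := Real.rpow_pos_of_pos (inv_pos.mpr hx) p
        have h4 : f y ^ p + f z ^ p ≤ M ^ p / ‖x‖⁻¹ ^ p := by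
          rw [le_div_iff₀ hxp]; linarith [key]
        have h5 : M ^ p / ‖x‖⁻¹ ^ p = M ^ p * ‖x‖ ^ p := by
          rw [Real.inv_rpow (norm_nonneg x), div_eq_mul_inv, inv_inv]
        linarith [h4, h5.symm.le]
      · intro a
        rw [Fin.sum_univ_two]
        simp only [Matrix.cons_val_zero, Matrix.cons_val_one, Matrix.head_cons]
        rw [happ_smul, happ_smul, abs_mul, abs_mul, abs_of_nonneg hc0,
          Real.mul_rpow hc0 (abs_nonneg _), Real.mul_rpow hc0 (abs_nonneg _), ← mul_add]
        have h6 : |y a| ^ p + |z a| ^ p ≤ ‖x‖ ^ p := by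
          refine (hc a).trans ?_
          exact Real.rpow_le_rpow (abs_nonneg _) (habs x a) hp0'
        calc ‖x‖⁻¹ ^ p * (|y a| ^ p + |z a| ^ p) ≤ ‖x‖⁻¹ ^ p * ‖x‖ ^ p := by
              apply mul_le_mul_of_nonneg_left h6 (le_of_lt (Real.rpow_pos_of_pos (inv_pos.mpr hx) p))
          _ = 1 := by
              rw [← Real.mul_rpow hc0 (norm_nonneg x), inv_mul_cancel₀ hxne, Real.one_rpow]
  have S1bdd' : ∀ x, BddAbove (S1 x) := fun x => ⟨M ^ p * ‖x‖ ^ p, fun r hr => S1bdd x r hr⟩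
  have S1ne : ∀ x, (S1 x).Nonempty := fun x => ⟨_, S1mem x⟩
  have S1nonneg : ∀ x, 0 ≤ sSup (S1 x) := fun x =>
    le_trans (Real.rpow_nonneg (hnn x) p) (le_csSup (S1bdd' x) (S1mem x))
  set g1 : lp (fun _ : A => ℝ) ∞ → ℝ := fun x => (sSup (S1 x)) ^ (1 / p) with hg1def
  have hg1nn : ∀ x, 0 ≤ g1 x := fun x => Real.rpow_nonneg (S1nonneg x) _
  have hfg1 : ∀ x, f x ≤ g1 x := by
    intro x
    have h1 : f x ^ p ≤ sSup (S1 x) := le_csSup (S1bdd' x) (S1mem x)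
    have h2 := Real.rpow_le_rpow (Real.rpow_nonneg (hnn x) p) h1 hip0
    rwa [hcanc2 _ (hnn x)] at h2
  -- smul stability of S1
  have S1smul : ∀ (t : ℝ), 0 ≤ t → ∀ x, ∀ r ∈ S1 x, t ^ p * r ∈ S1 (t • x) := by
    rintro t ht x r ⟨y, z, hc, rfl⟩
    refine ⟨t • y, t • z, fun a => ?_, ?_⟩
    · rw [happ_smul, happ_smul, happ_smul, abs_mul, abs_mul, abs_mul, abs_of_nonneg ht,
        Real.mul_rpow ht (abs_nonneg _), Real.mul_rpow ht (abs_nonneg _),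
        Real.mul_rpow ht (abs_nonneg _), ← mul_add]
      exact mul_le_mul_of_nonneg_left (hc a) (Real.rpow_nonneg ht p)
    · rw [hph t ht y, hph t ht z, Real.mul_rpow ht (hnn y), Real.mul_rpow ht (hnn z), mul_add]
  have g1hom : ∀ t : ℝ, 0 ≤ t → ∀ x, g1 (t • x) = t * g1 x := by
    intro t ht x
    rcases eq_or_lt_of_le ht with ht0 | ht0
    · -- t = 0
      subst ht0
      rw [zero_smul, zero_mul]
      have hsup0 : sSup (S1 (0 : lp (fun _ : A => ℝ) ∞)) = 0 := by
        refine le_antisymm (csSup_le (S1ne 0) fun r hr => ?_) (S1nonneg 0)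
        have h1 := S1bdd 0 r hr
        rw [norm_zero, Real.zero_rpow hpne, mul_zero] at h1
        exact h1
      rw [hg1def]
      simp only []
      rw [hsup0, Real.zero_rpow hipne]
    · have htp : (0:ℝ) < t ^ p := Real.rpow_pos_of_pos ht0 p
      have hle : sSup (S1 (t • x)) ≤ t ^ p * sSup (S1 x) := by
        apply csSup_le (S1ne _)
        intro r hr
        have h1 := S1smul t⁻¹ (inv_nonneg.mpr ht) (t • x) r hr
        rw [smul_smul, inv_mul_cancel₀ (ne_of_gt ht0), one_smul] at h1
        have h2 : t⁻¹ ^ p * r ≤ sSup (S1 x) := le_csSup (S1bdd' x) h1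
        rw [Real.inv_rpow (le_of_lt ht0)] at h2
        calc r = t ^ p * ((t ^ p)⁻¹ * r) := by
              rw [← mul_assoc, mul_inv_cancel₀ (ne_of_gt htp), one_mul]
          _ ≤ t ^ p * sSup (S1 x) := mul_le_mul_of_nonneg_left h2 (le_of_lt htp)
      have hge : t ^ p * sSup (S1 x) ≤ sSup (S1 (t • x)) := by
        rw [mul_comm, ← le_div_iff₀ htp]
        apply csSup_le (S1ne x)
        intro r hr
        rw [le_div_iff₀ htp, mul_comm]
        exact le_csSup (S1bdd' _) (S1smul t ht x r hr)
      have heq : sSup (S1 (t • x)) = t ^ p * sSup (S1 x) := le_antisymm hle hge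
      rw [hg1def]
      simp only []
      rw [heq, Real.mul_rpow (le_of_lt htp) (S1nonneg x), hcanc2 t (le_of_lt ht0)]
  -- norm equality for g1
  have hg1norm : fblNormP A p g1 = fblNormP A p f := by
    refine le_antisymm ?_ (fblNormP_mono hp0' f g1 hnn hfg1)
    rw [hNf]
    apply fblNormP_le_of_forall
    intro m x hx
    have hterm : ∀ i : Fin m, |g1 (x i)| ^ p = sSup (S1 (x i)) := by
      intro i
      rw [abs_of_nonneg (hg1nn _)]
      exact hcanc1 _ (S1nonneg _)
    have hbound : ∑ i, sSup (S1 (x i)) ≤ M ^ p := by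
      apply sum_csSup_le _ (fun i => S1ne (x i))
      intro r hr
      choose y z hcw hrw using hr
      set w : Fin (m + m) → lp (fun _ : A => ℝ) ∞ := Fin.addCases y z with hwdef
      have e1 : ∀ i : Fin m, w (Fin.castAdd m i) = y i := fun i => by
        rw [hwdef]; exact Fin.addCases_left i
      have e2 : ∀ i : Fin m, w (Fin.natAdd m i) = z i := fun i => by
        rw [hwdef]; exact Fin.addCases_right i
      have hwcond : ∀ a : A, ∑ i, |w i a| ^ p ≤ 1 := by
        intro a
        rw [Fin.sum_univ_add]
        calc (∑ i : Fin m, |w (Fin.castAdd m i) a| ^ p)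
              + ∑ i : Fin m, |w (Fin.natAdd m i) a| ^ p
            = (∑ i : Fin m, |y i a| ^ p) + ∑ i : Fin m, |z i a| ^ p := by
              simp only [e1, e2]
          _ = ∑ i : Fin m, (|y i a| ^ p + |z i a| ^ p) := Finset.sum_add_distrib.symm
          _ ≤ ∑ i : Fin m, |x i a| ^ p := Finset.sum_le_sum fun i _ => hcw i a
          _ ≤ 1 := hx a
      have hL := L1 (m + m) w hwcond
      rw [Fin.sum_univ_add] at hL
      calc ∑ i, r i = ∑ i : Fin m, (f (y i) ^ p + f (z i) ^ p) :=
            Finset.sum_congr rfl fun i _ => hrw i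
        _ = (∑ i : Fin m, f (y i) ^ p) + ∑ i : Fin m, f (z i) ^ p := Finset.sum_add_distrib
        _ = (∑ i : Fin m, |f (w (Fin.castAdd m i))| ^ p)
            + ∑ i : Fin m, |f (w (Fin.natAdd m i))| ^ p := by
              have habsf : ∀ v, |f v| = f v := fun v => abs_of_nonneg (hnn v)
              simp only [e1, e2, habsf]
        _ ≤ M ^ p := hL
    have hsum : ∑ i, |g1 (x i)| ^ p = ∑ i, sSup (S1 (x i)) :=
      Finset.sum_congr rfl fun i _ => hterm i
    rw [hsum]
    have hsum0 : 0 ≤ ∑ i, sSup (S1 (x i)) := Finset.sum_nonneg fun i _ => S1nonneg _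
    calc (∑ i, sSup (S1 (x i))) ^ (1 / p) ≤ (M ^ p) ^ (1 / p) :=
          Real.rpow_le_rpow hsum0 hbound hip0
      _ = M := hcanc2 M hM0
  have hg1f : g1 = f := hmax g1 hg1nn g1hom hfg1 hg1norm
  have hsupS1 : ∀ x, sSup (S1 x) = f x ^ p := by
    intro x
    have h1 : g1 x = f x := congrFun hg1f x
    have h2 : (sSup (S1 x)) ^ (1 / p) = f x := h1
    have h3 : (sSup (S1 x) ^ (1 / p)) ^ p = f x ^ p := by rw [h2]
    rwa [hcanc1 _ (S1nonneg x)] at h3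
  -- monotonicity of f
  have fmono : ∀ x y : lp (fun _ : A => ℝ) ∞, (∀ a, |x a| ≤ |y a|) → f x ≤ f y := by
    intro x y hxy
    have hmem : f x ^ p ∈ S1 y := by
      refine ⟨x, 0, fun a => ?_, by rw [hf0, Real.zero_rpow hpne, add_zero]⟩
      rw [happ_zero, abs_zero, Real.zero_rpow hpne, add_zero]
      exact Real.rpow_le_rpow (abs_nonneg _) (hxy a) hp0'
    have h1 := le_csSup (S1bdd' y) hmem
    rw [hsupS1 y] at h1
    exact hrec _ _ (hnn x) (hnn y) h1
  -- the functional F on the positive cone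
  set F : lp (fun _ : A => ℝ) ∞ → ℝ := fun u => f (absRpow (1 / p) hip0 u) ^ p with hFdef
  have hFnn : ∀ u, 0 ≤ F u := fun u => Real.rpow_nonneg (hnn _) _
  have hF0 : F 0 = 0 := by
    have habs0 : absRpow (1 / p) hip0 (0 : lp (fun _ : A => ℝ) ∞) = 0 := by
      ext a
      show |(0 : lp (fun _ : A => ℝ) ∞) a| ^ (1 / p) = (0 : lp (fun _ : A => ℝ) ∞) a
      rw [happ_zero, abs_zero, Real.zero_rpow hipne]
    rw [hFdef]; simp only []
    rw [habs0, hf0, Real.zero_rpow hpne]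
  -- superadditivity of F
  have fsuper : ∀ u v : lp (fun _ : A => ℝ) ∞, (∀ a, 0 ≤ u a) → (∀ a, 0 ≤ v a) →
      F u + F v ≤ F (u + v) := by
    intro u v hu hv
    have hmem : f (absRpow (1 / p) hip0 u) ^ p + f (absRpow (1 / p) hip0 v) ^ p
        ∈ S1 (absRpow (1 / p) hip0 (u + v)) := by
      refine ⟨absRpow (1 / p) hip0 u, absRpow (1 / p) hip0 v, fun a => ?_, rfl⟩
      show |(|u a| ^ (1 / p))| ^ p + |(|v a| ^ (1 / p))| ^ p ≤ |(|(u + v) a| ^ (1 / p))| ^ p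
      rw [abs_of_nonneg (Real.rpow_nonneg (abs_nonneg _) _),
        abs_of_nonneg (Real.rpow_nonneg (abs_nonneg _) _),
        abs_of_nonneg (Real.rpow_nonneg (abs_nonneg _) _),
        hcanc1 _ (abs_nonneg _), hcanc1 _ (abs_nonneg _), hcanc1 _ (abs_nonneg _),
        abs_of_nonneg (hu a), abs_of_nonneg (hv a), happ_add,
        abs_of_nonneg (add_nonneg (hu a) (hv a))]
    have h1 := le_csSup (S1bdd' _) hmem
    rw [hsupS1] at h1
    rw [hFdef]; simp only []
    exact h1
  have hFbound : ∀ u, F u ≤ M ^ p * ‖u‖ := by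
    intro u
    have h1 : f (absRpow (1 / p) hip0 u) ≤ M * ‖absRpow (1 / p) hip0 u‖ := fbound _
    have h3 : ‖absRpow (1 / p) hip0 u‖ ≤ ‖u‖ ^ (1 / p) := by
      apply lp.norm_le_of_forall_le'
      intro a
      show ‖|u a| ^ (1 / p)‖ ≤ ‖u‖ ^ (1 / p)
      rw [Real.norm_eq_abs, abs_of_nonneg (Real.rpow_nonneg (abs_nonneg _) _)]
      exact Real.rpow_le_rpow (abs_nonneg _) (habs u a) hip0
    have h4 : ‖absRpow (1 / p) hip0 u‖ ^ p ≤ ‖u‖ := by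
      have := Real.rpow_le_rpow (norm_nonneg _) h3 hp0'
      rwa [hcanc1 _ (norm_nonneg u)] at this
    rw [hFdef]; simp only []
    calc f (absRpow (1 / p) hip0 u) ^ p ≤ (M * ‖absRpow (1 / p) hip0 u‖) ^ p :=
          Real.rpow_le_rpow (hnn _) h1 hp0'
      _ = M ^ p * ‖absRpow (1 / p) hip0 u‖ ^ p := Real.mul_rpow hM0 (norm_nonneg _)
      _ ≤ M ^ p * ‖u‖ := mul_le_mul_of_nonneg_left h4 (Real.rpow_nonneg hM0 _)
  have hFsmul : ∀ c : ℝ, 0 ≤ c → ∀ u, F (c • u) = c * F u := by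
    intro c hc u
    have he : absRpow (1 / p) hip0 (c • u) = c ^ (1 / p) • absRpow (1 / p) hip0 u := by
      ext a
      show |(c • u) a| ^ (1 / p) = (c ^ (1 / p) • absRpow (1 / p) hip0 u) a
      rw [happ_smul, happ_smul, abs_mul, abs_of_nonneg hc, Real.mul_rpow hc (abs_nonneg _)]
      rfl
    rw [hFdef]; simp only []
    rw [he, hph _ (Real.rpow_nonneg hc _) _,
      Real.mul_rpow (Real.rpow_nonneg hc _) (hnn _), hcanc1 c hc]
  -- the sublinear majorant P
  set Psup : lp (fun _ : A => ℝ) ∞ → ℝ := fun z => sSup (Set.range fun a => z a) with hPsupdef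
  have hPsupBdd : ∀ z : lp (fun _ : A => ℝ) ∞, BddAbove (Set.range fun a : A => z a) :=
    fun z => ⟨‖z‖, by rintro r ⟨a, rfl⟩; exact (le_abs_self _).trans (habs z a)⟩
  have hPsupNe : ∀ z : lp (fun _ : A => ℝ) ∞, (Set.range fun a : A => z a).Nonempty :=
    fun z => Set.range_nonempty _
  have hPsup_le : ∀ (z : lp (fun _ : A => ℝ) ∞) (C : ℝ), (∀ a, z a ≤ C) → Psup z ≤ C :=
    fun z C h => csSup_le (hPsupNe z) (by rintro r ⟨a, rfl⟩; exact h a)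
  have hle_Psup : ∀ (z : lp (fun _ : A => ℝ) ∞) (a : A), z a ≤ Psup z :=
    fun z a => le_csSup (hPsupBdd z) ⟨a, rfl⟩
  have hPsup_norm : ∀ z : lp (fun _ : A => ℝ) ∞, Psup z ≤ ‖z‖ :=
    fun z => hPsup_le z _ fun a => (le_abs_self _).trans (habs z a)
  set P : lp (fun _ : A => ℝ) ∞ → ℝ := fun z => M ^ p * max (Psup z) 0 with hPdef
  have hP0 : P (0 : lp (fun _ : A => ℝ) ∞) = 0 := by
    have h1 : Psup (0 : lp (fun _ : A => ℝ) ∞) = 0 := by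
      refine le_antisymm (hPsup_le _ 0 fun a => (happ_zero a).le) ?_
      have := hle_Psup (0 : lp (fun _ : A => ℝ) ∞) (Classical.arbitrary A)
      rwa [happ_zero] at this
    rw [hPdef]; simp only []
    rw [h1, max_self, mul_zero]
  have hPadd : ∀ z w : lp (fun _ : A => ℝ) ∞, P (z + w) ≤ P z + P w := by
    intro z w
    have h1 : Psup (z + w) ≤ Psup z + Psup w := hPsup_le _ _ fun a => by
      rw [happ_add]; exact add_le_add (hle_Psup z a) (hle_Psup w a)
    rw [hPdef]; simp only []
    rw [← mul_add]
    refine mul_le_mul_of_nonneg_left ?_ (Real.rpow_nonneg hM0 _)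
    exact max_le (h1.trans (add_le_add (le_max_left _ _) (le_max_left _ _)))
      (add_nonneg (le_max_right _ _) (le_max_right _ _))
  have hPsmul : ∀ c : ℝ, 0 < c → ∀ z, P (c • z) = c * P z := by
    intro c hc z
    have h1 : Psup (c • z) = c * Psup z := by
      apply le_antisymm
      · apply hPsup_le
        intro a
        rw [happ_smul]
        exact mul_le_mul_of_nonneg_left (hle_Psup z a) hc.le
      · rw [mul_comm, ← le_div_iff₀ hc]
        apply hPsup_le
        intro a
        rw [le_div_iff₀ hc, mul_comm (z a) c, ← happ_smul]
        exact hle_Psup (c • z) a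
    rw [hPdef]; simp only []
    rw [h1]
    have h2 : max (c * Psup z) 0 = c * max (Psup z) 0 := by
      rw [mul_max_of_nonneg _ _ hc.le, mul_zero]
    rw [h2]; ring
  have hFP : ∀ u : lp (fun _ : A => ℝ) ∞, (∀ a, 0 ≤ u a) → F u ≤ P u := by
    intro u hu
    have h1 : ‖u‖ ≤ max (Psup u) 0 := by
      apply lp.norm_le_of_forall_le'
      intro a
      rw [Real.norm_eq_abs, abs_of_nonneg (hu a)]
      exact (hle_Psup u a).trans (le_max_left _ _)
    calc F u ≤ M ^ p * ‖u‖ := hFbound u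
      _ ≤ M ^ p * max (Psup u) 0 := mul_le_mul_of_nonneg_left h1 (Real.rpow_nonneg hM0 _)
  -- the inf-convolution Q
  set SQ : lp (fun _ : A => ℝ) ∞ → Set ℝ := fun z =>
    { r | ∃ u : lp (fun _ : A => ℝ) ∞, (∀ a, 0 ≤ u a) ∧ r = P (z + u) - F u } with hSQdef
  have hPz_mem : ∀ z, P z ∈ SQ z := by
    intro z
    exact ⟨0, fun a => (happ_zero a).ge, by rw [add_zero, hF0, sub_zero]⟩
  have hSQne : ∀ z, (SQ z).Nonempty := fun z => ⟨P z, hPz_mem z⟩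
  have hSQlow : ∀ z, ∀ r ∈ SQ z, -P (-z) ≤ r := by
    rintro z r ⟨u, hu, rfl⟩
    have h1 : F u ≤ P u := hFP u hu
    have h2 : P u ≤ P (z + u) + P (-z) := by
      have he : u = (z + u) + (-z) := by abel
      calc P u = P ((z + u) + (-z)) := by rw [← he]
        _ ≤ P (z + u) + P (-z) := hPadd _ _
    linarith
  have hSQbdd : ∀ z, BddBelow (SQ z) := fun z => ⟨-P (-z), fun r hr => hSQlow z r hr⟩
  set Q : lp (fun _ : A => ℝ) ∞ → ℝ := fun z => sInf (SQ z) with hQdef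
  have hQle : ∀ z, Q z ≤ P z := fun z => csInf_le (hSQbdd z) (hPz_mem z)
  have hQlow : ∀ z, -P (-z) ≤ Q z := fun z => le_csInf (hSQne z) (hSQlow z)
  have hQneg : ∀ u : lp (fun _ : A => ℝ) ∞, (∀ a, 0 ≤ u a) → Q (-u) ≤ -F u := by
    intro u hu
    apply csInf_le (hSQbdd _)
    exact ⟨u, hu, by rw [neg_add_cancel, hP0, zero_sub]⟩
  have hQadd : ∀ z1 z2, Q (z1 + z2) ≤ Q z1 + Q z2 := by
    intro z1 z2
    have key : ∀ r1 ∈ SQ z1, ∀ r2 ∈ SQ z2, Q (z1 + z2) ≤ r1 + r2 := by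
      rintro r1 ⟨u1, hu1, rfl⟩ r2 ⟨u2, hu2, rfl⟩
      have hXY : (z1 + z2) + (u1 + u2) = (z1 + u1) + (z2 + u2) := by abel
      have hmem : P ((z1 + u1) + (z2 + u2)) - F (u1 + u2) ∈ SQ (z1 + z2) := by
        refine ⟨u1 + u2, fun a => ?_, by rw [hXY]⟩
        rw [happ_add]; exact add_nonneg (hu1 a) (hu2 a)
      have h1 := csInf_le (hSQbdd _) hmem
      have h2 : P ((z1 + u1) + (z2 + u2)) ≤ P (z1 + u1) + P (z2 + u2) := hPadd _ _
      have h3 : F u1 + F u2 ≤ F (u1 + u2) := fsuper u1 u2 hu1 hu2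
      linarith
    have k1 : ∀ r2 ∈ SQ z2, Q (z1 + z2) - r2 ≤ Q z1 := by
      intro r2 hr2
      apply le_csInf (hSQne z1)
      intro r1 hr1
      linarith [key r1 hr1 r2 hr2]
    have k2 : Q (z1 + z2) - Q z1 ≤ Q z2 := by
      apply le_csInf (hSQne z2)
      intro r2 hr2
      linarith [k1 r2 hr2]
    linarith
  have hSQsmul : ∀ c : ℝ, 0 < c → ∀ z, ∀ r ∈ SQ z, c * r ∈ SQ (c • z) := by
    rintro c hc z r ⟨u, hu, rfl⟩
    refine ⟨c • u, fun a => ?_, ?_⟩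
    · rw [happ_smul]; exact mul_nonneg hc.le (hu a)
    · rw [← smul_add, hPsmul c hc, hFsmul c hc.le, mul_sub]
  have hQsmul : ∀ c : ℝ, 0 < c → ∀ z, Q (c • z) = c * Q z := by
    intro c hc z
    apply le_antisymm
    · have h2 : Q (c • z) / c ≤ Q z := by
        apply le_csInf (hSQne z)
        intro r hr
        rw [div_le_iff₀' hc]
        exact csInf_le (hSQbdd _) (hSQsmul c hc z r hr)
      calc Q (c • z) = Q (c • z) / c * c := (div_mul_cancel₀ _ (ne_of_gt hc)).symm
        _ ≤ Q z * c := mul_le_mul_of_nonneg_right h2 hc.le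
        _ = c * Q z := mul_comm _ _
    · have h2 : ∀ r ∈ SQ (c • z), c * Q z ≤ r := by
        intro r hr
        have h3 : c⁻¹ * r ∈ SQ z := by
          have := hSQsmul c⁻¹ (inv_pos.mpr hc) (c • z) r hr
          rwa [smul_smul, inv_mul_cancel₀ (ne_of_gt hc), one_smul] at this
        have h4 : Q z ≤ c⁻¹ * r := csInf_le (hSQbdd z) h3
        calc c * Q z ≤ c * (c⁻¹ * r) := mul_le_mul_of_nonneg_left h4 hc.le
          _ = r := by rw [← mul_assoc, mul_inv_cancel₀ (ne_of_gt hc), one_mul]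
      exact le_csInf (hSQne _) h2
  -- Hahn-Banach
  have hQ0 : 0 ≤ Q 0 := by
    have := hQlow 0
    rwa [neg_zero, hP0, neg_zero] at this
  obtain ⟨φl, -, hφQ⟩ :=
    exists_extension_of_le_sublinear (⟨⊥, 0⟩ : lp (fun _ : A => ℝ) ∞ →ₗ.[ℝ] ℝ) Q
      (fun c hc x => hQsmul c hc x) hQadd (by
        rintro ⟨x, hx⟩
        have hx0 : x = 0 := by simpa using hx
        subst hx0
        simpa using hQ0)
  have hφP : ∀ z, φl z ≤ P z := fun z => (hφQ z).trans (hQle z)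
  have hφF : ∀ u : lp (fun _ : A => ℝ) ∞, (∀ a, 0 ≤ u a) → F u ≤ φl u := by
    intro u hu
    have h1 : φl (-u) ≤ -F u := (hφQ (-u)).trans (hQneg u hu)
    rw [map_neg] at h1
    linarith
  -- the function g2
  set g2 : lp (fun _ : A => ℝ) ∞ → ℝ := fun x => (φl (absRpow p hp0' x)) ^ (1 / p) with hg2def
  have habsnn : ∀ (x : lp (fun _ : A => ℝ) ∞) (a : A), 0 ≤ (absRpow p hp0' x) a :=
    fun x a => Real.rpow_nonneg (abs_nonneg _) _
  have hφnn : ∀ x, 0 ≤ φl (absRpow p hp0' x) := fun x => (hFnn _).trans (hφF _ (habsnn x))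
  have hg2nn : ∀ x, 0 ≤ g2 x := fun x => Real.rpow_nonneg (hφnn x) _
  have hg2hom : ∀ t : ℝ, 0 ≤ t → ∀ x, g2 (t • x) = t * g2 x := by
    intro t ht x
    have he : absRpow p hp0' (t • x) = t ^ p • absRpow p hp0' x := by
      ext a
      show |(t • x) a| ^ p = (t ^ p • absRpow p hp0' x) a
      rw [happ_smul, happ_smul, abs_mul, abs_of_nonneg ht, Real.mul_rpow ht (abs_nonneg _)]
      rfl
    rw [hg2def]; simp only []
    rw [he, map_smul, smul_eq_mul, Real.mul_rpow (Real.rpow_nonneg ht _) (hφnn x), hcanc2 t ht]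
  have hfg2 : ∀ x, f x ≤ g2 x := by
    intro x
    have h1 : f x ≤ f (absRpow (1 / p) hip0 (absRpow p hp0' x)) := by
      apply fmono
      intro a
      have heq : (absRpow (1 / p) hip0 (absRpow p hp0' x)) a = |x a| := by
        show |(|x a| ^ p)| ^ (1 / p) = |x a|
        rw [abs_of_nonneg (Real.rpow_nonneg (abs_nonneg _) _)]
        exact hcanc2 _ (abs_nonneg _)
      rw [heq, abs_abs]
    have h2 : f x ^ p ≤ F (absRpow p hp0' x) := by
      rw [hFdef]; simp only []
      exact Real.rpow_le_rpow (hnn x) h1 hp0'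
    have h3 : f x ^ p ≤ φl (absRpow p hp0' x) := h2.trans (hφF _ (habsnn x))
    have h4 := Real.rpow_le_rpow (Real.rpow_nonneg (hnn x) p) h3 hip0
    rwa [hcanc2 _ (hnn x)] at h4
  have hg2norm : fblNormP A p g2 = fblNormP A p f := by
    refine le_antisymm ?_ (fblNormP_mono hp0' f g2 hnn hfg2)
    rw [hNf]
    apply fblNormP_le_of_forall
    intro m x hx
    set U : lp (fun _ : A => ℝ) ∞ := ∑ i, absRpow p hp0' (x i) with hUdef
    have hUa : ∀ a, U a = ∑ i, |x i a| ^ p := fun a => by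
      rw [hUdef, happ_sum]
      rfl
    have hterm : ∀ i : Fin m, |g2 (x i)| ^ p = φl (absRpow p hp0' (x i)) := by
      intro i
      rw [abs_of_nonneg (hg2nn _)]
      exact hcanc1 _ (hφnn _)
    have hsum : ∑ i, |g2 (x i)| ^ p = φl U := by
      rw [show (∑ i, |g2 (x i)| ^ p) = ∑ i, φl (absRpow p hp0' (x i)) from
        Finset.sum_congr rfl fun i _ => hterm i, hUdef, map_sum]
    have hφU : φl U ≤ M ^ p := by
      have h1 : φl U ≤ P U := hφP U
      have h2 : Psup U ≤ 1 := hPsup_le _ _ fun a => by rw [hUa]; exact hx a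
      have h3 : max (Psup U) 0 ≤ 1 := max_le h2 zero_le_one
      calc φl U ≤ M ^ p * max (Psup U) 0 := h1
        _ ≤ M ^ p * 1 := mul_le_mul_of_nonneg_left h3 (Real.rpow_nonneg hM0 _)
        _ = M ^ p := mul_one _
    have hφU0 : 0 ≤ φl U := by
      rw [← hsum]
      exact Finset.sum_nonneg fun i _ => Real.rpow_nonneg (abs_nonneg _) _
    rw [hsum]
    calc (φl U) ^ (1 / p) ≤ (M ^ p) ^ (1 / p) := Real.rpow_le_rpow hφU0 hφU hip0
      _ = M := hcanc2 M hM0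
  have hg2f : g2 = f := hmax g2 hg2nn hg2hom hfg2 hg2norm
  -- package the continuous linear functional
  have hb : ∀ z, ‖φl z‖ ≤ M ^ p * ‖z‖ := by
    intro z
    rw [Real.norm_eq_abs, abs_le]
    constructor
    · have h1 : φl (-z) ≤ P (-z) := hφP (-z)
      have h2 : P (-z) ≤ M ^ p * ‖z‖ := by
        refine mul_le_mul_of_nonneg_left ?_ (Real.rpow_nonneg hM0 _)
        refine max_le ((hPsup_norm _).trans ?_) (norm_nonneg z)
        rw [norm_neg]
      rw [map_neg] at h1
      linarith
    · refine (hφP z).trans ?_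
      exact mul_le_mul_of_nonneg_left (max_le (hPsup_norm z) (norm_nonneg z))
        (Real.rpow_nonneg hM0 _)
  refine ⟨LinearMap.mkContinuous φl (M ^ p) hb, fun x => ?_⟩
  have h1 : f x = g2 x := (congrFun hg2f x).symm
  have h2 : (LinearMap.mkContinuous φl (M ^ p) hb) (absRpow p (zero_le_one.trans hp) x)
      = φl (absRpow p hp0' x) := rfl
  rw [h1, h2, abs_of_nonneg (hφnn x)]
end

section
/- Let A be a nonempty set and 1 ≤ p < ∞. Let F be a nonempty, upwards directed (in the pointwise order), family of nonnegative positively homogeneous functions f : ℓ∞(A) → ℝ, each of which is continuous on the closed unit ball of ℓ∞(A) with respect to the topology of pointwise convergence, and suppose M := sup{‖f‖_{FBL^p} : f ∈ F} < ∞. Then there exists an absolutely summable h : A → ℝ with Σ_{a∈A} |h(a)| ≤ M^p such that for every f ∈ F and every x ∈ ℓ∞(A) one has f(x) ≤ |Σ_{a∈A} h(a)·|x(a)|^p|^{1/p}. Consequently, since g(x) := |Σ_{a∈A} h(a)·|x(a)|^p|^{1/p} satisfies ‖g‖_{FBL^p} ≤ M and belongs to the free p-convex Banach lattice FBL^(p)[ℓ₁(A)],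 the Banach lattice FBL^(p)[ℓ₁(A)] has the strong Nakano property. -/
/-!
Put `C = M ^ p`. For `v ∈ ℓ∞(A)` let `envelope p C F v` be the infimum of
`C ‖u + v‖ - ∑ᵢ fᵢ(xᵢ) ^ p` over finite families `fᵢ ∈ F`, `xᵢ ∈ ℓ∞(A)` and `u` with
`∑ᵢ |xᵢ| ^ p ≤ u` pointwise. As `F` is directed, all `fᵢ` may be replaced by one `f ∈ F`, and
rescaling the FBL^p bound of `f` gives `∑ᵢ fᵢ(xᵢ) ^ p ≤ C ‖u‖`; so the envelope is finite, and it
is sublinear. A Hahn–Banach functional `g` below it satisfies `g ≤ C ‖·‖` and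
`∑ᵢ fᵢ(xᵢ) ^ p ≤ g u` whenever `∑ᵢ |xᵢ| ^ p ≤ u`. Hence the weights `h a = g eₐ` are nonnegative
with `∑ h ≤ C`, and `f(x) ^ p ≤ ∑_{a ∈ S} h a |x a| ^ p` for `x` supported in a finite set `S`.
Continuity of `f` for pointwise convergence on the unit ball extends this to the ball, and
homogeneity to all of `ℓ∞(A)`.
-/

open scoped ENNReal

/-- The closed unit ball of `ℓ∞(A)`, equipped with the topology of pointwise convergence
(equivalently, the weak* topology from the identification `ℓ∞(A) = ℓ₁(A)*`). -/
def ballPtwise (A : Type*) : Type _ := {x : lp (fun _ : A => ℝ) ∞ // ‖x‖ ≤ 1}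

instance (A : Type*) : TopologicalSpace (ballPtwise A) :=
  TopologicalSpace.induced (fun x : ballPtwise A => (x.1 : ∀ _ : A, ℝ)) Pi.topologicalSpace

open scoped lp Pointwise Topology
open Filter

theorem exists_linearMap_le_sublinear {E : Type*} [AddCommGroup E] [Module ℝ E] (N : E → ℝ)
    (N_hom : ∀ c : ℝ, 0 < c → ∀ x, N (c • x) = c * N x) (N_add : ∀ x y, N (x + y) ≤ N x + N y) :
    ∃ g : E →ₗ[ℝ] ℝ, ∀ x, g x ≤ N x := by
  have N_zero : N 0 = 0 := by
    have h2 := N_hom 2 two_pos 0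
    rw [smul_zero] at h2
    linarith
  obtain ⟨g, -, hg⟩ := exists_extension_of_le_sublinear ⟨⊥, 0⟩ N N_hom N_add fun x => by
    simp [(Submodule.mem_bot ℝ).mp x.2, N_zero]
  exact ⟨g, hg⟩

theorem le_of_forall_norm_le_one_le {E : Type*} [NormedAddCommGroup E] [NormedSpace ℝ E]
    {f g : E → ℝ} (hf : ∀ t : ℝ, 0 ≤ t → ∀ x, f (t • x) = t * f x)
    (hg : ∀ t : ℝ, 0 ≤ t → ∀ x, g (t • x) = t * g x) (hfg : ∀ x, ‖x‖ ≤ 1 → f x ≤ g x) (x : E) :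
    f x ≤ g x := by
  rcases eq_or_ne x 0 with rfl | hx
  · exact hfg 0 (by simp)
  have ht : 0 < ‖x‖ := norm_pos_iff.mpr hx
  have hy : ‖‖x‖⁻¹ • x‖ ≤ 1 := by rw [norm_smul, norm_inv, norm_norm, inv_mul_cancel₀ ht.ne']
  rw [← smul_inv_smul₀ ht.ne' x, hf _ ht.le, hg _ ht.le]
  exact mul_le_mul_of_nonneg_left (hfg _ hy) ht.le

theorem fblNormP_le_iff {A : Type*} {p : ℝ} (hp : 0 < p) {f : ℓ^∞(A, ℝ) → ℝ} {N : ℝ≥0∞}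
    (hN : N ≠ ⊤) :
    fblNormP A p f ≤ N ↔ ∀ (m : ℕ) (x : Fin m → ℓ^∞(A, ℝ)),
      (∀ a, ∑ i, |x i a| ^ p ≤ 1) → ∑ i, |f (x i)| ^ p ≤ N.toReal ^ p := by
  simp only [fblNormP, iSup_le_iff, ENNReal.ofReal_le_iff_le_toReal hN, one_div]
  refine forall₂_congr fun m x => forall_congr' fun _ => ?_
  exact Real.rpow_inv_le_iff_of_pos (Finset.sum_nonneg fun i _ => by positivity)
    ENNReal.toReal_nonneg hp

section WeightedNorm

variable {A : Type*} {p : ℝ} {h : A → ℝ}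

noncomputable def weightedNorm (p : ℝ) (h : A → ℝ) (x : ℓ^∞(A, ℝ)) : ℝ :=
  |∑' a, h a * |x a| ^ p| ^ (1 / p)

theorem weightedNorm_smul (hp : 0 < p) {t : ℝ} (ht : 0 ≤ t) (x : ℓ^∞(A, ℝ)) :
    weightedNorm p h (t • x) = t * weightedNorm p h x := by
  have hterm : ∀ a, h a * |(t • x) a| ^ p = t ^ p * (h a * |x a| ^ p) := fun a => by
    rw [lp.coeFn_smul, Pi.smul_apply, smul_eq_mul, abs_mul, abs_of_nonneg ht,
      Real.mul_rpow ht (abs_nonneg _)]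
    ring
  rw [weightedNorm, weightedNorm, tsum_congr hterm, tsum_mul_left, abs_mul,
    abs_of_nonneg (by positivity), Real.mul_rpow (by positivity) (abs_nonneg _), one_div,
    Real.rpow_rpow_inv ht hp.ne']

theorem weightedNorm_rpow (hp : 0 < p) (x : ℓ^∞(A, ℝ)) :
    |weightedNorm p h x| ^ p = |∑' a, h a * |x a| ^ p| := by
  rw [weightedNorm, abs_of_nonneg (by positivity), one_div,
    Real.rpow_inv_rpow (abs_nonneg _) hp.ne']

theorem summable_mul_abs_rpow (hp : 0 ≤ p) (h0 : ∀ a, 0 ≤ h a) (hs : Summable h)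
    (x : ℓ^∞(A, ℝ)) : Summable fun a => h a * |x a| ^ p := by
  refine Summable.of_nonneg_of_le (fun a => mul_nonneg (h0 a) (by positivity)) (fun a => ?_) (hs.mul_right (‖x‖ ^ p))
  have hxa : |x a| ≤ ‖x‖ := by
    simpa using lp.norm_apply_le_norm ENNReal.top_ne_zero x a
  exact mul_le_mul_of_nonneg_left (Real.rpow_le_rpow (abs_nonneg _) hxa hp) (h0 a)

theorem fblNormP_weightedNorm_le (hp : 0 < p) (h0 : ∀ a, 0 ≤ h a) (hs : Summable h)
    {N : ℝ≥0∞} (hN : N ≠ ⊤) (hsum : ∑' a, h a ≤ N.toReal ^ p) :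
    fblNormP A p (weightedNorm p h) ≤ N := by
  refine (fblNormP_le_iff hp hN).2 fun m x hx => ?_
  have hsx := fun i => summable_mul_abs_rpow hp.le h0 hs (x i)
  calc ∑ i, |weightedNorm p h (x i)| ^ p = ∑ i, ∑' a, h a * |x i a| ^ p := by
        refine Finset.sum_congr rfl fun i _ => ?_
        rw [weightedNorm_rpow hp,
          abs_of_nonneg (tsum_nonneg fun a => mul_nonneg (h0 a) (by positivity))]
    _ = ∑' a, ∑ i, h a * |x i a| ^ p := (Summable.tsum_finsetSum fun i _ => hsx i).symm
    _ ≤ ∑' a, h a := by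
        refine (summable_sum fun i _ => hsx i).tsum_le_tsum (fun a => ?_) hs
        rw [← Finset.mul_sum]
        exact mul_le_of_le_one_right (h0 a) (hx a)
    _ ≤ N.toReal ^ p := hsum

end WeightedNorm

structure BoundedDirectedFamily {A : Type*} (p C : ℝ) (F : Set (ℓ^∞(A, ℝ) → ℝ)) : Prop where
  exponent_pos : 0 < p
  nonempty : F.Nonempty
  directed : DirectedOn (· ≤ ·) F
  nonneg : ∀ f ∈ F, ∀ x, 0 ≤ f x
  homogeneous : ∀ f ∈ F, ∀ t : ℝ, 0 ≤ t → ∀ x, f (t • x) = t * f x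
  sum_rpow_le : ∀ f ∈ F, ∀ (m : ℕ) (x : Fin m → ℓ^∞(A, ℝ)),
    (∀ a, ∑ i, |x i a| ^ p ≤ 1) → ∑ i, |f (x i)| ^ p ≤ C

def envelopeSet {A : Type*} (p C : ℝ) (F : Set (ℓ^∞(A, ℝ) → ℝ)) (v : ℓ^∞(A, ℝ)) : Set ℝ :=
  {r | ∃ (m : ℕ) (x : Fin m → ℓ^∞(A, ℝ)) (φ : Fin m → F) (u : ℓ^∞(A, ℝ)),
    (∀ a, ∑ i, |x i a| ^ p ≤ u a) ∧ C * ‖u + v‖ - ∑ i, (φ i).1 (x i) ^ p ≤ r}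

noncomputable def envelope {A : Type*} (p C : ℝ) (F : Set (ℓ^∞(A, ℝ) → ℝ)) (v : ℓ^∞(A, ℝ)) :
    ℝ :=
  sInf (envelopeSet p C F v)

namespace BoundedDirectedFamily

variable {A : Type*} {p C : ℝ} {F : Set (ℓ^∞(A, ℝ) → ℝ)}

theorem bound_nonneg (hF : BoundedDirectedFamily p C F) : 0 ≤ C := by
  simpa using hF.sum_rpow_le _ hF.nonempty.some_mem 0 Fin.elim0 (by simp)

theorem sum_rpow_le_mul (hF : BoundedDirectedFamily p C F) {m : ℕ} (x : Fin m → ℓ^∞(A, ℝ))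
    (φ : Fin m → F) {c : ℝ} (hc : 0 < c) (hx : ∀ a, ∑ i, |x i a| ^ p ≤ c) :
    ∑ i, (φ i).1 (x i) ^ p ≤ c * C := by
  have := hF.nonempty.to_subtype
  obtain ⟨⟨g, hg⟩, hφg⟩ := hF.directed.directed_val.finite_le φ
  set s := c ^ p⁻¹
  have hs : 0 < s := by positivity
  have hsp : s ^ p = c := Real.rpow_inv_rpow hc.le hF.exponent_pos.ne'
  have hscale : ∀ (y : ℓ^∞(A, ℝ)) a, |(s⁻¹ • y) a| ^ p = c⁻¹ * |y a| ^ p := fun y a => by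
    rw [lp.coeFn_smul, Pi.smul_apply, smul_eq_mul, abs_mul, abs_of_pos (inv_pos.2 hs),
      Real.mul_rpow (inv_pos.2 hs).le (abs_nonneg _), Real.inv_rpow hs.le, hsp]
  have hadm : ∀ a, ∑ i, |(s⁻¹ • x i) a| ^ p ≤ 1 := fun a => by
    simp only [hscale, ← Finset.mul_sum]
    exact inv_mul_le_one_of_le₀ (hx a) hc.le
  calc ∑ i, (φ i).1 (x i) ^ p ≤ ∑ i, g (x i) ^ p := Finset.sum_le_sum fun i _ =>
        Real.rpow_le_rpow (hF.nonneg _ (φ i).2 _) (hφg i _) hF.exponent_pos.le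
    _ = c * ∑ i, |g (s⁻¹ • x i)| ^ p := by
        rw [Finset.mul_sum]
        refine Finset.sum_congr rfl fun i _ => ?_
        rw [hF.homogeneous g hg _ (inv_pos.2 hs).le, abs_of_nonneg
          (mul_nonneg (inv_pos.2 hs).le (hF.nonneg g hg _)), Real.mul_rpow (inv_pos.2 hs).le
          (hF.nonneg g hg _), Real.inv_rpow hs.le, hsp, mul_inv_cancel_left₀ hc.ne']
    _ ≤ c * C := mul_le_mul_of_nonneg_left (hF.sum_rpow_le g hg _ _ hadm) hc.le

theorem envelopeSet_nonempty (v : ℓ^∞(A, ℝ)) : (envelopeSet p C F v).Nonempty :=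
  ⟨_, 0, Fin.elim0, Fin.elim0, 0, by simp, le_rfl⟩

theorem bddBelow_envelopeSet (hF : BoundedDirectedFamily p C F) (v : ℓ^∞(A, ℝ)) :
    BddBelow (envelopeSet p C F v) := by
  refine ⟨-((‖v‖ + 1) * C), ?_⟩
  rintro r ⟨m, x, φ, u, hxu, hr⟩
  have hu : ∀ a, u a ≤ ‖u‖ := fun a => (le_abs_self _).trans (by
    simpa using lp.norm_apply_le_norm ENNReal.top_ne_zero u a)
  have hsum := hF.sum_rpow_le_mul x φ (by positivity : 0 < ‖u‖ + 1)
    fun a => (hxu a).trans ((hu a).trans (le_add_of_nonneg_right zero_le_one))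
  have htri : ‖u‖ ≤ ‖u + v‖ + ‖v‖ := by simpa using norm_sub_le (u + v) v
  nlinarith [hF.bound_nonneg]

theorem envelope_le (hF : BoundedDirectedFamily p C F) {v : ℓ^∞(A, ℝ)} {r : ℝ}
    (hr : r ∈ envelopeSet p C F v) : envelope p C F v ≤ r :=
  csInf_le (hF.bddBelow_envelopeSet v) hr

theorem add_mem_envelopeSet {v w : ℓ^∞(A, ℝ)} {r s : ℝ} (hr : r ∈ envelopeSet p C F v)
    (hs : s ∈ envelopeSet p C F w) (hC : 0 ≤ C) : r + s ∈ envelopeSet p C F (v + w) := by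
  obtain ⟨m, x, φ, u, hxu, hr⟩ := hr
  obtain ⟨n, y, ψ, u', hyu, hs⟩ := hs
  refine ⟨m + n, Fin.append x y, Fin.append φ ψ, u + u', fun a => ?_, ?_⟩
  · simpa [Fin.sum_univ_add] using add_le_add (hxu a) (hyu a)
  · have htri : ‖u + u' + (v + w)‖ ≤ ‖u + v‖ + ‖u' + w‖ := by
      rw [add_add_add_comm]; exact norm_add_le _ _
    simp only [Fin.sum_univ_add, Fin.append_left, Fin.append_right]
    nlinarith

theorem envelope_add_le (hF : BoundedDirectedFamily p C F) (v w : ℓ^∞(A, ℝ)) :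
    envelope p C F (v + w) ≤ envelope p C F v + envelope p C F w := by
  rw [envelope, envelope, envelope, ← csInf_add (envelopeSet_nonempty v) (hF.bddBelow_envelopeSet v)
    (envelopeSet_nonempty w) (hF.bddBelow_envelopeSet w)]
  refine csInf_le_csInf (hF.bddBelow_envelopeSet _)
    ((envelopeSet_nonempty v).add (envelopeSet_nonempty w)) ?_
  rintro _ ⟨r, hr, s, hs, rfl⟩
  exact add_mem_envelopeSet hr hs hF.bound_nonneg

end BoundedDirectedFamily

namespace BoundedDirectedFamily

variable {A : Type*} {p C : ℝ} {F : Set (ℓ^∞(A, ℝ) → ℝ)}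

theorem smul_mem_envelopeSet (hF : BoundedDirectedFamily p C F) {c : ℝ} (hc : 0 < c)
    {v : ℓ^∞(A, ℝ)} {r : ℝ} (hr : r ∈ envelopeSet p C F v) :
    c * r ∈ envelopeSet p C F (c • v) := by
  obtain ⟨m, x, φ, u, hxu, hr⟩ := hr
  set s := c ^ p⁻¹
  have hs : 0 < s := by positivity
  have hsp : s ^ p = c := Real.rpow_inv_rpow hc.le hF.exponent_pos.ne'
  refine ⟨m, fun i => s • x i, φ, c • u, fun a => ?_, ?_⟩
  · have hterm : ∀ i, |(s • x i) a| ^ p = c * |x i a| ^ p := fun i => by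
      rw [lp.coeFn_smul, Pi.smul_apply, smul_eq_mul, abs_mul, abs_of_pos hs,
        Real.mul_rpow hs.le (abs_nonneg _), hsp]
    rw [lp.coeFn_smul, Pi.smul_apply, smul_eq_mul]
    simpa only [hterm, ← Finset.mul_sum] using mul_le_mul_of_nonneg_left (hxu a) hc.le
  · have hterm : ∀ i, (φ i).1 (s • x i) ^ p = c * (φ i).1 (x i) ^ p := fun i => by
      rw [hF.homogeneous _ (φ i).2 _ hs.le, Real.mul_rpow hs.le (hF.nonneg _ (φ i).2 _), hsp]
    rw [← smul_add, norm_smul, Real.norm_of_nonneg hc.le]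
    simp only [hterm, ← Finset.mul_sum]
    nlinarith

theorem envelope_smul_le (hF : BoundedDirectedFamily p C F) {c : ℝ} (hc : 0 < c)
    (v : ℓ^∞(A, ℝ)) : envelope p C F (c • v) ≤ c * envelope p C F v := by
  rw [envelope, envelope, ← smul_eq_mul, ← Real.sInf_smul_of_nonneg hc.le]
  refine csInf_le_csInf (hF.bddBelow_envelopeSet _) ((envelopeSet_nonempty v).smul_set) ?_
  rintro _ ⟨r, hr, rfl⟩
  exact hF.smul_mem_envelopeSet hc hr

theorem envelope_smul (hF : BoundedDirectedFamily p C F) {c : ℝ} (hc : 0 < c)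
    (v : ℓ^∞(A, ℝ)) : envelope p C F (c • v) = c * envelope p C F v := by
  refine le_antisymm (hF.envelope_smul_le hc v) ?_
  have := hF.envelope_smul_le (inv_pos.2 hc) (c • v)
  rw [inv_smul_smul₀ hc.ne'] at this
  rwa [le_inv_mul_iff₀ hc] at this

theorem exists_linearMap_le_envelope (hF : BoundedDirectedFamily p C F) :
    ∃ g : ℓ^∞(A, ℝ) →ₗ[ℝ] ℝ, ∀ v, g v ≤ envelope p C F v :=
  exists_linearMap_le_sublinear _ (fun _ hc => hF.envelope_smul hc) hF.envelope_add_le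

variable {g : ℓ^∞(A, ℝ) →ₗ[ℝ] ℝ}

theorem sum_rpow_le_of_le_envelope (hF : BoundedDirectedFamily p C F)
    (hg : ∀ v, g v ≤ envelope p C F v) {m : ℕ} (x : Fin m → ℓ^∞(A, ℝ)) (φ : Fin m → F)
    {u : ℓ^∞(A, ℝ)} (hxu : ∀ a, ∑ i, |x i a| ^ p ≤ u a) :
    ∑ i, (φ i).1 (x i) ^ p ≤ g u := by
  have hmem : C * ‖u + -u‖ - ∑ i, (φ i).1 (x i) ^ p ∈ envelopeSet p C F (-u) :=
    ⟨m, x, φ, u, hxu, le_rfl⟩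
  have := (hg (-u)).trans (hF.envelope_le hmem)
  rw [map_neg, add_neg_cancel, norm_zero, mul_zero] at this
  linarith

theorem nonneg_of_le_envelope (hF : BoundedDirectedFamily p C F)
    (hg : ∀ v, g v ≤ envelope p C F v) {u : ℓ^∞(A, ℝ)} (hu : ∀ a, 0 ≤ u a) : 0 ≤ g u := by
  simpa using hF.sum_rpow_le_of_le_envelope hg Fin.elim0 Fin.elim0 (by simpa using hu)

theorem le_mul_norm_of_le_envelope (hF : BoundedDirectedFamily p C F)
    (hg : ∀ v, g v ≤ envelope p C F v) (v : ℓ^∞(A, ℝ)) : g v ≤ C * ‖v‖ :=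
  (hg v).trans <| hF.envelope_le ⟨0, Fin.elim0, Fin.elim0, 0, by simp, by simp⟩

end BoundedDirectedFamily

section SumSingle

variable {A : Type*} [DecidableEq A]

noncomputable def sumSingle (S : Finset A) (c : A → ℝ) : ℓ^∞(A, ℝ) :=
  ∑ a ∈ S, lp.single ∞ a (c a)

theorem sumSingle_apply (S : Finset A) (c : A → ℝ) (b : A) :
    sumSingle S c b = if b ∈ S then c b else 0 := by
  rw [sumSingle, lp.coeFn_sum, Finset.sum_apply]
  simp [Pi.single_apply]

theorem map_sumSingle (g : ℓ^∞(A, ℝ) →ₗ[ℝ] ℝ) (S : Finset A) (c : A → ℝ) :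
    g (sumSingle S c) = ∑ a ∈ S, c a * g (lp.single ∞ a 1) := by
  refine (map_sum g _ S).trans (Finset.sum_congr rfl fun a _ => ?_)
  rw [← smul_eq_mul, ← map_smul, ← lp.single_smul, smul_eq_mul, mul_one]

theorem norm_sumSingle_le (S : Finset A) {c : A → ℝ} {C : ℝ} (hC : 0 ≤ C)
    (hc : ∀ a, |c a| ≤ C) : ‖sumSingle S c‖ ≤ C :=
  lp.norm_le_of_forall_le hC fun b => by
    rw [sumSingle_apply]; split_ifs <;> simp [hc, hC]

theorem tendsto_apply_sumSingle {f : ℓ^∞(A, ℝ) → ℝ}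
    (hf : Continuous fun x : ballPtwise A => f x.1) {y : ℓ^∞(A, ℝ)} (hy : ‖y‖ ≤ 1) :
    Tendsto (fun S => f (sumSingle S y)) atTop (𝓝 (f y)) := by
  have hyS : ∀ S, ‖sumSingle S y‖ ≤ 1 := fun S => norm_sumSingle_le S zero_le_one fun a =>
    (by simpa using lp.norm_apply_le_norm ENNReal.top_ne_zero y a : |y a| ≤ ‖y‖).trans hy
  let z : Finset A → ballPtwise A := fun S => ⟨sumSingle S y, hyS S⟩
  let y' : ballPtwise A := ⟨y, hy⟩
  have hind : Topology.IsInducing fun x : ballPtwise A => (x.1 : A → ℝ) := ⟨rfl⟩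
  have hball : Tendsto z atTop (𝓝 y') := by
    refine hind.tendsto_nhds_iff.2 (tendsto_pi_nhds.2 fun b => ?_)
    refine tendsto_const_nhds.congr' ?_
    filter_upwards [eventually_ge_atTop {b}] with S hS
    show y b = sumSingle S y b
    rw [sumSingle_apply, if_pos (Finset.singleton_subset_iff.1 hS)]
  exact (hf.tendsto _).comp hball

end SumSingle

namespace BoundedDirectedFamily

variable {A : Type*} {p C : ℝ} {F : Set (ℓ^∞(A, ℝ) → ℝ)} {g : ℓ^∞(A, ℝ) →ₗ[ℝ] ℝ}

theorem rpow_apply_sumSingle_le [DecidableEq A] (hF : BoundedDirectedFamily p C F)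
    (hg : ∀ v, g v ≤ envelope p C F v) {f : ℓ^∞(A, ℝ) → ℝ} (hf : f ∈ F) (S : Finset A)
    (y : ℓ^∞(A, ℝ)) :
    f (sumSingle S y) ^ p ≤ ∑ a ∈ S, g (lp.single ∞ a 1) * |y a| ^ p := by
  have := hF.sum_rpow_le_of_le_envelope hg ![sumSingle S y] ![⟨f, hf⟩]
    (u := sumSingle S fun a => |y a| ^ p) fun a => by
      simp only [Fin.sum_univ_one, Matrix.cons_val_zero, sumSingle_apply]
      split_ifs
      · rfl
      · simp [Real.zero_rpow hF.exponent_pos.ne']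
  simpa [map_sumSingle, mul_comm] using this

theorem exists_weight (hF : BoundedDirectedFamily p C F)
    (hcont : ∀ f ∈ F, Continuous fun x : ballPtwise A => f x.1) :
    ∃ h : A → ℝ, (∀ a, 0 ≤ h a) ∧ Summable h ∧ ∑' a, h a ≤ C ∧
      ∀ f ∈ F, ∀ x, f x ≤ weightedNorm p h x := by
  classical
  obtain ⟨g, hg⟩ := hF.exists_linearMap_le_envelope
  set h := fun a => g (lp.single ∞ a 1)
  have h0 : ∀ a, 0 ≤ h a := fun a => hF.nonneg_of_le_envelope hg fun b => by
    simp only [lp.single_apply, Pi.single_apply]; split_ifs <;> norm_num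
  have hfin : ∀ S, ∑ a ∈ S, h a ≤ C := fun S => by
    have := (hF.le_mul_norm_of_le_envelope hg (sumSingle S 1)).trans
      (mul_le_of_le_one_right hF.bound_nonneg (norm_sumSingle_le S zero_le_one (by simp)))
    simpa [map_sumSingle] using this
  have hs : Summable h := summable_of_sum_le h0 hfin
  refine ⟨h, h0, hs, hs.tsum_le_of_sum_le hfin, fun f hf => le_of_forall_norm_le_one_le
    (hF.homogeneous f hf) (fun t ht => weightedNorm_smul hF.exponent_pos ht) fun y hy => ?_⟩
  refine le_of_tendsto' (tendsto_apply_sumSingle (hcont f hf) hy) fun S => ?_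
  rw [weightedNorm, one_div,
    Real.le_rpow_inv_iff_of_pos (hF.nonneg f hf _) (abs_nonneg _) hF.exponent_pos]
  calc f (sumSingle S y) ^ p ≤ ∑ a ∈ S, h a * |y a| ^ p := hF.rpow_apply_sumSingle_le hg hf S y
    _ ≤ ∑' a, h a * |y a| ^ p := (summable_mul_abs_rpow hF.exponent_pos.le h0 hs y).sum_le_tsum
        S fun a _ => mul_nonneg (h0 a) (by positivity)
    _ ≤ _ := le_abs_self _

end BoundedDirectedFamily

theorem fblP_ell1_strongNakano_general
    (A : Type*) (p : ℝ) (hp : 1 ≤ p)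
    (F : Set (lp (fun _ : A => ℝ) ∞ → ℝ)) (hne : F.Nonempty)
    (hdir : DirectedOn (· ≤ ·) F)
    (hprop : ∀ f ∈ F, (∀ x, 0 ≤ f x) ∧
      (∀ t : ℝ, 0 ≤ t → ∀ x, f (t • x) = t * f x) ∧
      Continuous fun x : ballPtwise A => f x.1)
    (hfin : (⨆ f ∈ F, fblNormP A p f) ≠ ⊤) :
    ∃ h : A → ℝ, (Summable fun a => |h a|) ∧
      (∑' a : A, |h a|) ≤ (⨆ f ∈ F, fblNormP A p f).toReal ^ p ∧
      (∀ f ∈ F, ∀ x : lp (fun _ : A => ℝ) ∞,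
        f x ≤ |∑' a : A, h a * |x a| ^ p| ^ (1 / p)) ∧
      fblNormP A p (fun x => |∑' a : A, h a * |x a| ^ p| ^ (1 / p)) ≤
        ⨆ f ∈ F, fblNormP A p f := by
  have hp0 : 0 < p := by linarith
  have hF : BoundedDirectedFamily p ((⨆ f ∈ F, fblNormP A p f).toReal ^ p) F :=
    { exponent_pos := hp0
      nonempty := hne
      directed := hdir
      nonneg := fun f hf => (hprop f hf).1
      homogeneous := fun f hf => (hprop f hf).2.1
      sum_rpow_le := fun f hf => (fblNormP_le_iff hp0 hfin).1 (le_biSup _ hf) }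
  obtain ⟨h, h0, hs, hsum, hdom⟩ := hF.exists_weight fun f hf => (hprop f hf).2.2
  have habs : ∀ a, |h a| = h a := fun a => abs_of_nonneg (h0 a)
  refine ⟨h, ?_, ?_, hdom, fblNormP_weightedNorm_le hp0 h0 hs hfin hsum⟩ <;> simpa only [habs]

/-- **Theorem (strong Nakano property of `FBL^(p)[ℓ₁(A)]`).** Let `F` be a nonempty upwards
directed family of nonnegative, positively homogeneous functions on `ℓ∞(A)`, each continuous
on the unit ball for the topology of pointwise convergence (as all elements of
`FBL^(p)[ℓ₁(A)]` are), with `M := sup_{f∈F} ‖f‖_{FBL^p} < ∞`. Then there is an absolutely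
summable `h : A → ℝ` with `Σ_a |h(a)| ≤ M^p` such that
`g(x) := |Σ_a h(a)|x(a)|^p|^{1/p}` dominates every `f ∈ F` pointwise; moreover
`‖g‖_{FBL^p} ≤ M`, so that `FBL^(p)[ℓ₁(A)]` has the strong Nakano property. -/
theorem fblP_ell1_strongNakano
    (A : Type*) [Nonempty A] (p : ℝ) (hp : 1 ≤ p)
    (F : Set (lp (fun _ : A => ℝ) ∞ → ℝ)) (hne : F.Nonempty)
    (hdir : DirectedOn (· ≤ ·) F)
    (hprop : ∀ f ∈ F, (∀ x, 0 ≤ f x) ∧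
      (∀ t : ℝ, 0 ≤ t → ∀ x, f (t • x) = t * f x) ∧
      Continuous fun x : ballPtwise A => f x.1)
    (hfin : (⨆ f ∈ F, fblNormP A p f) ≠ ⊤) :
    ∃ h : A → ℝ, (Summable fun a => |h a|) ∧
      (∑' a : A, |h a|) ≤ (⨆ f ∈ F, fblNormP A p f).toReal ^ p ∧
      (∀ f ∈ F, ∀ x : lp (fun _ : A => ℝ) ∞,
        f x ≤ |∑' a : A, h a * |x a| ^ p| ^ (1 / p)) ∧
      fblNormP A p (fun x => |∑' a : A, h a * |x a| ^ p| ^ (1 / p)) ≤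
        ⨆ f ∈ F, fblNormP A p f :=
  fblP_ell1_strongNakano_general A p hp F hne hdir hprop hfin
end
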